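/- For every integer n ≥ 1 and all z, the twisted HR polynomial P_n(z; α+1, β−1) satisfies both: (i) P_n(z; α+1, β−1) = P_n(z) + b_n·P_{n−1}(z), and (ii) z·P_n(z; α+1, β−1) = P_{n+1}(z) + d_n·P_n(z). -/

import Mathlib

open Finset

/-- Pochhammer symbol `(a)_k = a (a+1) ⋯ (a+k-1)`. -/
noncomputable def poch (a : ℝ) (k : ℕ) : ℝ := ∏ i ∈ Finset.range k, (a + (i : ℝ))

/-- The Hendriksen–van Rossum polynomial `P_n(z; α, β)`. -/
noncomputable def HR (α β : ℝ) (n : ℕ) (z : ℝ) : ℝ :=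
  (poch β n / poch (α + 1) n) *
    ∑ k ∈ Finset.range (n + 1),
      poch (-(n : ℝ)) k * poch (α + 1) k /
          (poch (1 - β - (n : ℝ)) k * (Nat.factorial k : ℝ)) * z ^ k

/-- `d_m(α,β) = −(m+β)/(m+α+1)`. -/
noncomputable def dco (α β m : ℝ) : ℝ := -(m + β) / (m + α + 1)

/-- `b_m(α,β) = −m(m+α+β)/((m+α)(m+α+1))`. -/
noncomputable def bco (α β m : ℝ) : ℝ := -(m * (m + α + β)) / ((m + α) * (m + α + 1))

/-!
Compare coefficients of `z ^ k`. The coefficient `c_{n,k}` of `P_n(z; α, β)` is a hypergeometric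
term: the shifts `(α, β) ↦ (α + 1, β - 1)`, `n ↦ n + 1` and `k ↦ k + 1` multiply it by explicit
rational functions of `α, β, n, k`. The degree shift is used in the direction
`c_{n,k} = c_{n+1,k} · r`, which stays valid where `c_{n,k}` vanishes. Writing every coefficient
in (i) and (ii) as such a multiple of one `c_{n+1,k}` turns both into identities between rational
functions. The sums can be taken over a common range because `(-n)_k = 0` for `k > n`.
-/

lemma poch_succ (a : ℝ) (k : ℕ) : poch a (k + 1) = poch a k * (a + k) :=
  prod_range_succ _ k

lemma poch_succ' (a : ℝ) (k : ℕ) : poch a (k + 1) = a * poch (a + 1) k := by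
  simp only [poch, prod_range_succ', Nat.cast_add, Nat.cast_one, Nat.cast_zero, add_zero]
  rw [mul_comm]
  congr 1
  exact prod_congr rfl fun i _ ↦ by ring

lemma poch_add_one {a : ℝ} (ha : a ≠ 0) (k : ℕ) :
    poch (a + 1) k = (a + k) / a * poch a k := by
  rw [div_mul_eq_mul_div, eq_div_iff ha, mul_comm _ a, ← poch_succ', poch_succ, mul_comm]

lemma poch_eq_div_mul_poch_add_one {a : ℝ} (k : ℕ) (h : a + k ≠ 0) :
    poch a k = a / (a + k) * poch (a + 1) k := by
  rw [div_mul_eq_mul_div, eq_div_iff h, ← poch_succ', poch_succ]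

lemma poch_neg_natCast_eq_zero {n k : ℕ} (h : n < k) : poch (-(n : ℝ)) k = 0 :=
  prod_eq_zero (mem_range.2 h) (by simp)

lemma ne_zero_of_forall_ne_intCast {x y : ℝ} (hx : ∀ m : ℤ, x ≠ m) (j : ℤ)
    (h : y = x + j ∨ y = -(x + j) := by
      first | (left; push_cast; ring1) | (right; push_cast; ring1)) :
    y ≠ 0 := by
  rintro rfl
  exact hx (-j) (by push_cast; rcases h with h | h <;> linarith)

namespace HR

noncomputable def coeff (α β : ℝ) (n k : ℕ) : ℝ :=
  poch β n / poch (α + 1) n *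
    (poch (-(n : ℝ)) k * poch (α + 1) k / (poch (1 - β - n) k * (k.factorial : ℝ)))

lemma eq_sum_coeff (α β : ℝ) (n : ℕ) (z : ℝ) :
    HR α β n z = ∑ k ∈ range (n + 1), coeff α β n k * z ^ k := by
  simp only [HR, coeff, mul_sum, mul_assoc]

lemma coeff_eq_zero_of_lt (α β : ℝ) {n k : ℕ} (h : n < k) : coeff α β n k = 0 := by
  simp [coeff, poch_neg_natCast_eq_zero h]

lemma eq_sum_coeff_of_le (α β : ℝ) {n N : ℕ} (h : n + 1 ≤ N) (z : ℝ) :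
    HR α β n z = ∑ k ∈ range N, coeff α β n k * z ^ k := by
  rw [eq_sum_coeff]
  refine sum_subset (range_subset_range.2 h) fun k _ hk ↦ ?_
  rw [coeff_eq_zero_of_lt α β (by simpa using hk), zero_mul]

variable {α β : ℝ}

lemma coeff_succ_index (n k : ℕ) :
    coeff α β n (k + 1)
      = coeff α β n k * ((k - n) * (α + 1 + k) / ((1 - β - n + k) * (k + 1))) := by
  simp only [coeff, poch_succ, Nat.factorial_succ]
  push_cast
  simp only [div_eq_mul_inv, mul_inv]
  ring

lemma coeff_add_one_sub_one {n : ℕ} (k : ℕ) (hα : α + 1 ≠ 0) (hβ : 1 - β - n ≠ 0) :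
    coeff (α + 1) (β - 1) n k
      = coeff α β n k * ((1 - β) * (α + 1 + k) / ((α + 1 + n) * (1 - β - n + k))) := by
  have hβ' : β - 1 + n ≠ 0 := fun h ↦ hβ (by linarith)
  simp only [coeff]
  rw [poch_eq_div_mul_poch_add_one n hβ', sub_add_cancel, poch_add_one hα, poch_add_one hα,
    show 1 - (β - 1) - (n : ℝ) = 1 - β - n + 1 by ring, poch_add_one hβ]
  field_simp
  ring

lemma coeff_eq_coeff_succ_degree_mul {n k : ℕ} (hα : α + 1 + n ≠ 0) (hβ : β + n ≠ 0)
    (hβk : β + n - k ≠ 0) :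
    coeff α β n k
      = coeff α β (n + 1) k * ((α + 1 + n) * (n + 1 - k) / ((n + 1) * (β + n - k))) := by
  have hβ' : 1 - β - (n + 1) ≠ 0 := fun h ↦ hβ (by linarith)
  have hβk' : 1 - β - (n + 1) + k ≠ 0 := fun h ↦ hβk (by linarith)
  have hn : -((n : ℝ) + 1) ≠ 0 := neg_ne_zero.2 n.cast_add_one_ne_zero
  simp only [coeff]
  push_cast
  rw [poch_succ β, poch_succ (α + 1), show -(n : ℝ) = -(n + 1) + 1 by ring, poch_add_one hn,
    show 1 - β - (n : ℝ) = 1 - β - (n + 1) + 1 by ring, poch_add_one hβ']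
  field_simp
  ring

section NonInteger

variable (hα : ∀ m : ℤ, α ≠ m) (hβ : ∀ m : ℤ, β ≠ m)
include hα hβ

lemma coeff_add_one_sub_one_eq_add_bco_mul (n k : ℕ) :
    coeff (α + 1) (β - 1) (n + 1) k = coeff α β (n + 1) k + bco α β (n + 1) * coeff α β n k := by
  have hα₁ : α + 1 ≠ 0 := ne_zero_of_forall_ne_intCast hα 1
  have hαn : α + 1 + n ≠ 0 := ne_zero_of_forall_ne_intCast hα (1 + n)
  have hαn₁ : α + 1 + (n + 1) ≠ 0 := ne_zero_of_forall_ne_intCast hα (n + 2)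
  have hb₁ : (n : ℝ) + 1 + α ≠ 0 := ne_zero_of_forall_ne_intCast hα (n + 1)
  have hb₂ : (n : ℝ) + 1 + α + 1 ≠ 0 := ne_zero_of_forall_ne_intCast hα (n + 2)
  have hβn : β + n ≠ 0 := ne_zero_of_forall_ne_intCast hβ n
  have hβn₁ : 1 - β - ↑(n + 1) ≠ 0 := ne_zero_of_forall_ne_intCast hβ n
  have hβk : β + n - k ≠ 0 := ne_zero_of_forall_ne_intCast hβ (n - k)
  have hβk₁ : 1 - β - (n + 1) + k ≠ 0 := ne_zero_of_forall_ne_intCast hβ (n - k)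
  rw [coeff_add_one_sub_one k hα₁ hβn₁, coeff_eq_coeff_succ_degree_mul hαn hβn hβk, bco]
  push_cast
  field_simp
  ring

lemma coeff_add_one_sub_one_eq_add_dco_mul (n k : ℕ) :
    coeff (α + 1) (β - 1) n k = coeff α β (n + 1) (k + 1) + dco α β n * coeff α β n (k + 1) := by
  have hα₁ : α + 1 ≠ 0 := ne_zero_of_forall_ne_intCast hα 1
  have hαn : α + 1 + n ≠ 0 := ne_zero_of_forall_ne_intCast hα (1 + n)
  have hd : (n : ℝ) + α + 1 ≠ 0 := ne_zero_of_forall_ne_intCast hα (1 + n)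
  have hβn : β + n ≠ 0 := ne_zero_of_forall_ne_intCast hβ n
  have hβn' : 1 - β - n ≠ 0 := ne_zero_of_forall_ne_intCast hβ (n - 1)
  have hβk : β + n - k ≠ 0 := ne_zero_of_forall_ne_intCast hβ (n - k)
  have hβk' : 1 - β - n + k ≠ 0 := ne_zero_of_forall_ne_intCast hβ (n - k - 1)
  have hβk₁ : 1 - β - (n + 1) + k ≠ 0 := ne_zero_of_forall_ne_intCast hβ (n - k)
  rw [coeff_succ_index, coeff_succ_index, coeff_add_one_sub_one k hα₁ hβn',
    coeff_eq_coeff_succ_degree_mul hαn hβn hβk, dco]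
  push_cast
  field_simp
  ring

lemma coeff_succ_zero_add_dco_mul_coeff_zero (n : ℕ) :
    coeff α β (n + 1) 0 + dco α β n * coeff α β n 0 = 0 := by
  have hαn : α + 1 + n ≠ 0 := ne_zero_of_forall_ne_intCast hα (1 + n)
  have hd : (n : ℝ) + α + 1 ≠ 0 := ne_zero_of_forall_ne_intCast hα (1 + n)
  have hβn : β + n ≠ 0 := ne_zero_of_forall_ne_intCast hβ n
  rw [coeff_eq_coeff_succ_degree_mul hαn hβn (by simpa using hβn), dco]
  push_cast
  field_simp
  ring

theorem add_one_sub_one_eq_add_bco_mul (n : ℕ) (z : ℝ) :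
    HR (α + 1) (β - 1) (n + 1) z = HR α β (n + 1) z + bco α β (n + 1) * HR α β n z := by
  rw [eq_sum_coeff (α + 1), eq_sum_coeff α β (n + 1),
    eq_sum_coeff_of_le α β (N := n + 1 + 1) (n + 1).le_succ, mul_sum, ← sum_add_distrib]
  refine sum_congr rfl fun k _ ↦ ?_
  rw [coeff_add_one_sub_one_eq_add_bco_mul hα hβ]
  ring

theorem mul_add_one_sub_one_eq_add_dco_mul (n : ℕ) (z : ℝ) :
    z * HR (α + 1) (β - 1) n z = HR α β (n + 1) z + dco α β n * HR α β n z := by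
  calc z * HR (α + 1) (β - 1) n z
      = ∑ k ∈ range (n + 1), (coeff α β (n + 1) (k + 1) + dco α β n * coeff α β n (k + 1))
          * z ^ (k + 1) := by
        rw [eq_sum_coeff, mul_sum]
        refine sum_congr rfl fun k _ ↦ ?_
        rw [coeff_add_one_sub_one_eq_add_dco_mul hα hβ]
        ring
    _ = ∑ k ∈ range (n + 2), (coeff α β (n + 1) k + dco α β n * coeff α β n k) * z ^ k := by
        rw [sum_range_succ' _ (n + 1), coeff_succ_zero_add_dco_mul_coeff_zero hα hβ, zero_mul,
          add_zero]
    _ = HR α β (n + 1) z + dco α β n * HR α β n z := by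
        rw [eq_sum_coeff α β (n + 1), eq_sum_coeff_of_le α β (N := n + 2) (n + 1).le_succ, mul_sum,
          ← sum_add_distrib]
        refine sum_congr rfl fun k _ ↦ ?_
        ring

end NonInteger

end HR

theorem stmt11_general (α β : ℝ)
    (hα : ∀ m : ℤ, α ≠ (m : ℝ)) (hβ : ∀ m : ℤ, β ≠ (m : ℝ))
    (n : ℕ) (z : ℝ) :
    HR (α + 1) (β - 1) n z = HR α β n z + bco α β (n : ℝ) * HR α β (n - 1) z
    ∧ z * HR (α + 1) (β - 1) n z = HR α β (n + 1) z + dco α β (n : ℝ) * HR α β n z := by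
  refine ⟨?_, HR.mul_add_one_sub_one_eq_add_dco_mul hα hβ n z⟩
  cases n with
  | zero => simp [HR, poch, bco]
  | succ n => exact_mod_cast HR.add_one_sub_one_eq_add_bco_mul hα hβ n z

/-- For `n ≥ 1`: (i) `P_n(z; α+1, β−1) = P_n(z) + b_n P_{n−1}(z)` and
(ii) `z P_n(z; α+1, β−1) = P_{n+1}(z) + d_n P_n(z)`. -/
theorem stmt11 (α β : ℝ)
    (hα : ∀ m : ℤ, α ≠ (m : ℝ)) (hβ : ∀ m : ℤ, β ≠ (m : ℝ))
    (hαβ : ∀ m : ℤ, α + β ≠ (m : ℝ))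
    (n : ℕ) (hn : 1 ≤ n) (z : ℝ) :
    HR (α + 1) (β - 1) n z = HR α β n z + bco α β (n : ℝ) * HR α β (n - 1) z
    ∧ z * HR (α + 1) (β - 1) n z = HR α β (n + 1) z + dco α β (n : ℝ) * HR α β n z :=
  stmt11_general α β hα hβ n z
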